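/- Let m ≥ 1, let I ⊆ {0,1,…,2m−1} be a subset with |I| = k, and let u be the unique integer with 0 ≤ u < 2^{2m}−1 and u ≡ Σ_{i∈I}(−2)^i − (4^m−1)/3 (mod 2^{2m}−1). Then O(u) − E(u) = m − k (as integers); in particular, wt₂(u) is even if and only if m−k is even. -/

import Mathlib

/-- `wt₂(u)`: the number of ones among the binary digits `u_0, …, u_{2m-1}` of `u`. -/
def wt2 (m u : ℕ) : ℕ := ((Finset.range (2 * m)).filter fun i => u.testBit i).card

/-- `O(u) = #{0 ≤ i ≤ m-1 : u_{2i+1} = 1}`. -/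
def Ofun (m u : ℕ) : ℕ := ((Finset.range m).filter fun i => u.testBit (2 * i + 1)).card

/-- `E(u) = #{0 ≤ i ≤ m-1 : u_{2i} = 1}`. -/
def Efun (m u : ℕ) : ℕ := ((Finset.range m).filter fun i => u.testBit (2 * i)).card

/-- `Θ_k = {ζ^u : 0 ≤ u ≤ 4^m - 1, |O(u) - E(u)| = m - k}`. -/
def ThetaK {K : Type*} [Monoid K] (m : ℕ) (ζ : K) (k : ℕ) : Set K :=
  {z | ∃ u : ℕ, u ≤ 4 ^ m - 1 ∧ ((Ofun m u : ℤ) - (Efun m u : ℤ)).natAbs = m - k ∧ z = ζ ^ u}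

/-- `Θ^{(r)} = {ζ^u : 0 ≤ u ≤ 4^m - 1, wt₂(u) = 2m - r}`. -/
def ThetaR {K : Type*} [Monoid K] (m : ℕ) (ζ : K) (r : ℕ) : Set K :=
  {z | ∃ u : ℕ, u ≤ 4 ^ m - 1 ∧ wt2 m u = 2 * m - r ∧ z = ζ ^ u}

/-!
Modulo `N = 4^m - 1` we have `-(4^m-1)/3 ≡ -∑_{j<m} 4^j`, and adding `N = ∑_{i<2m} 2^i` turns
`∑_{i∈I} (-2)^i - ∑_{j<m} 4^j` into a sum of distinct powers `2^i`, `i < 2m`: an even position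
is a binary digit iff it lies in `I`, an odd one iff it does not. So the digits of `u` are (up
to the ambiguity `0 ≡ N`, where `O = E`) read off from `I`, giving
`O(u) - E(u) = (m - #odd(I)) - #even(I) = m - k`; and `wt₂ = O + E ≡ O - E (mod 2)`.
-/
open Finset

lemma Finset.sum_range_two_mul {M : Type*} [AddCommMonoid M] (m : ℕ) (f : ℕ → M) :
    ∑ i ∈ range (2 * m), f i = ∑ i ∈ range m, f (2 * i) + ∑ i ∈ range m, f (2 * i + 1) := by
  induction m with
  | zero => simp
  | succ m ih =>
    rw [show 2 * (m + 1) = 2 * m + 1 + 1 by ring, sum_range_succ, sum_range_succ, ih,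
      sum_range_succ, sum_range_succ]
    abel

lemma Nat.testBit_sum_two_pow (s : Finset ℕ) (j : ℕ) :
    (∑ i ∈ s, 2 ^ i).testBit j = decide (j ∈ s) := by
  rw [Bool.eq_iff_iff, decide_eq_true_iff, ← Nat.mem_bitIndices, ← List.mem_toFinset,
    toFinset_bitIndices_sum_two_pow]

lemma wt2_eq_Ofun_add_Efun (m u : ℕ) : wt2 m u = Ofun m u + Efun m u := by
  simp only [wt2, Ofun, Efun, card_filter, sum_range_two_mul]
  exact add_comm _ _

lemma Ofun_sum_two_pow (m : ℕ) (s : Finset ℕ) :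
    Ofun m (∑ i ∈ s, 2 ^ i) = #{i ∈ range m | 2 * i + 1 ∈ s} := by
  simp [Ofun, Nat.testBit_sum_two_pow]

lemma Efun_sum_two_pow (m : ℕ) (s : Finset ℕ) :
    Efun m (∑ i ∈ s, 2 ^ i) = #{i ∈ range m | 2 * i ∈ s} := by
  simp [Efun, Nat.testBit_sum_two_pow]

lemma Ofun_two_pow_sub_one (m : ℕ) : Ofun m (2 ^ (2 * m) - 1) = m := by
  rw [Ofun, filter_true_of_mem, card_range]
  intro i hi
  simp only [Nat.testBit_two_pow_sub_one, decide_eq_true_eq]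
  grind

lemma Efun_two_pow_sub_one (m : ℕ) : Efun m (2 ^ (2 * m) - 1) = m := by
  rw [Efun, filter_true_of_mem, card_range]
  intro i hi
  simp only [Nat.testBit_two_pow_sub_one, decide_eq_true_eq]
  grind

lemma card_eq_card_even_add_card_odd {m : ℕ} {I : Finset ℕ} (hI : I ⊆ range (2 * m)) :
    #I = #{i ∈ range m | 2 * i ∈ I} + #{i ∈ range m | 2 * i + 1 ∈ I} := by
  conv_lhs => rw [← inter_eq_right.mpr hI, ← filter_mem_eq_inter, card_filter, sum_range_two_mul]
  rw [card_filter, card_filter]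

/-- The digit set of `∑_{i∈I} (-2)^i - (4^m-1)/3` modulo `4^m - 1`: the odd positions of `I`
are complemented in `{0, …, 2m-1}`. -/
def oddFlip (m : ℕ) (I : Finset ℕ) : Finset ℕ := {i ∈ range (2 * m) | Even i ↔ i ∈ I}

lemma sum_neg_two_pow_sub_eq {m : ℕ} {I : Finset ℕ} (hI : I ⊆ range (2 * m)) :
    ∑ i ∈ I, (-2 : ℤ) ^ i - (4 ^ m - 1) / 3 =
      ∑ i ∈ oddFlip m I, (2 : ℤ) ^ i - (2 ^ (2 * m) - 1) := by
  have h4 : ((4 : ℤ) ^ m - 1) / 3 = ∑ i ∈ range (2 * m), if Even i then (2 : ℤ) ^ i else 0 := by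
    rw [Int.ediv_eq_of_eq_mul_left (by norm_num) (by simpa using (geom_sum_mul (4 : ℤ) m).symm),
      sum_range_two_mul]
    simp [pow_mul]
  have h2 : (2 : ℤ) ^ (2 * m) - 1 = ∑ i ∈ range (2 * m), (2 : ℤ) ^ i := by
    simpa using (geom_sum_mul (2 : ℤ) (2 * m)).symm
  have hI' : ∑ i ∈ I, (-2 : ℤ) ^ i = ∑ i ∈ range (2 * m), if i ∈ I then (-2 : ℤ) ^ i else 0 := by
    rw [sum_ite_mem, inter_eq_right.mpr hI]
  rw [hI', h4, h2, oddFlip, sum_filter, ← sum_sub_distrib, ← sum_sub_distrib]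
  refine sum_congr rfl fun i _ => ?_
  rcases Nat.even_or_odd i with hi | hi
  · by_cases hiI : i ∈ I <;> simp [hi, hiI, hi.neg_pow]
  · by_cases hiI : i ∈ I <;> simp [hiI, hi.neg_pow, Nat.not_even_iff_odd.mpr hi]

lemma Ofun_sub_Efun_oddFlip {m : ℕ} {I : Finset ℕ} (hI : I ⊆ range (2 * m)) :
    (Ofun m (∑ i ∈ oddFlip m I, 2 ^ i) : ℤ) - Efun m (∑ i ∈ oddFlip m I, 2 ^ i) = m - #I := by
  have hodd : {i ∈ range m | 2 * i + 1 ∈ oddFlip m I} = {i ∈ range m | 2 * i + 1 ∉ I} :=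
    filter_congr fun i hi => by grind [oddFlip]
  have heven : {i ∈ range m | 2 * i ∈ oddFlip m I} = {i ∈ range m | 2 * i ∈ I} :=
    filter_congr fun i hi => by grind [oddFlip]
  have hcompl := card_filter_add_card_filter_not (s := range m) (fun i => 2 * i + 1 ∈ I)
  rw [Ofun_sum_two_pow, Efun_sum_two_pow, hodd, heven, card_eq_card_even_add_card_odd hI]
  rw [card_range] at hcompl
  omega

lemma Int.eq_or_eq_zero_of_modEq {n u v : ℤ} (hu₀ : 0 ≤ u) (hu : u < n) (hv₀ : 0 ≤ v)
    (hv : v ≤ n) (h : u ≡ v [ZMOD n]) : u = v ∨ u = 0 ∧ v = n := by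
  rcases hv.lt_or_eq with hv | rfl
  · left
    rwa [Int.ModEq, Int.emod_eq_of_lt hu₀ hu, Int.emod_eq_of_lt hv₀ hv] at h
  · exact .inr ⟨by simpa [Int.ModEq, Int.emod_eq_of_lt hu₀ hu] using h, rfl⟩

theorem stmt14_general (m : ℕ) (I : Finset ℕ) (hI : I ⊆ Finset.range (2 * m))
    (k : ℕ) (hk : I.card = k) (u : ℕ) (hu : u < 2 ^ (2 * m) - 1)
    (hmod : (u : ℤ) ≡ (∑ i ∈ I, (-2 : ℤ) ^ i) - (4 ^ m - 1) / 3 [ZMOD (2 ^ (2 * m) - 1)]) :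
    (Ofun m u : ℤ) - (Efun m u : ℤ) = (m : ℤ) - (k : ℤ) ∧
      (Even (wt2 m u) ↔ Even ((m : ℤ) - (k : ℤ))) := by
  obtain ⟨v, hv_def⟩ : ∃ v, ∑ i ∈ oddFlip m I, 2 ^ i = v := ⟨_, rfl⟩
  have hN : ((2 ^ (2 * m) - 1 : ℕ) : ℤ) = 2 ^ (2 * m) - 1 := by
    push_cast [Nat.one_le_two_pow]; rfl
  have hv : v ≤ 2 ^ (2 * m) - 1 := hv_def ▸
    Nat.le_sub_one_of_lt (Nat.geomSum_lt le_rfl fun i hi => by simpa using (mem_filter.mp hi).1)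
  have huv : (u : ℤ) ≡ v [ZMOD 2 ^ (2 * m) - 1] := by
    rw [sum_neg_two_pow_sub_eq hI] at hmod
    exact hmod.trans (Int.modEq_iff_dvd.mpr ⟨1, by rw [← hv_def]; push_cast; ring⟩)
  have hOE : (Ofun m u : ℤ) - Efun m u = m - k := by
    rw [← hk, ← Ofun_sub_Efun_oddFlip hI, hv_def]
    rcases Int.eq_or_eq_zero_of_modEq (by positivity) (by omega) (by positivity) (by omega)
      huv with h | ⟨h, h'⟩
    · rw [Nat.cast_inj.mp h]
    · rw [Nat.cast_eq_zero.mp h, Nat.cast_inj.mp (h'.trans hN.symm), Ofun_two_pow_sub_one,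
        Efun_two_pow_sub_one]
      simp [Ofun, Efun]
  refine ⟨hOE, ?_⟩
  rw [← hOE, wt2_eq_Ofun_add_Efun, ← Int.even_coe_nat, Nat.cast_add, Int.even_add, Int.even_sub]

/-- Let `m ≥ 1`, `I ⊆ {0, …, 2m-1}` with `|I| = k`, and let `u` be the unique
integer with `0 ≤ u < 2^{2m} - 1` and `u ≡ Σ_{i∈I} (-2)^i - (4^m-1)/3 (mod 2^{2m}-1)`. Then
`O(u) - E(u) = m - k`; in particular `wt₂(u)` is even iff `m - k` is even. -/
theorem stmt14 (m : ℕ) (hm : 1 ≤ m) (I : Finset ℕ) (hI : I ⊆ Finset.range (2 * m))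
    (k : ℕ) (hk : I.card = k) (u : ℕ) (hu : u < 2 ^ (2 * m) - 1)
    (hmod : (u : ℤ) ≡ (∑ i ∈ I, (-2 : ℤ) ^ i) - (4 ^ m - 1) / 3 [ZMOD (2 ^ (2 * m) - 1)]) :
    (Ofun m u : ℤ) - (Efun m u : ℤ) = (m : ℤ) - (k : ℤ) ∧
      (Even (wt2 m u) ↔ Even ((m : ℤ) - (k : ℤ))) :=
  stmt14_general m I hI k hk u hu hmod
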